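/- Suppose a strictly D_c-stable partition P of N exists. Then every partition P' of N that is closed under the applications of the merge and split rules (i.e., neither rule can be applied to P') equals P. -/

import Mathlib

open Finset

variable {α : Type*} [DecidableEq α] [Fintype α]

/-- A collection: a family of pairwise disjoint nonempty coalitions of `N`. -/
def IsCollection (C : Finset (Finset α)) : Prop :=
  (∀ S ∈ C, S ≠ ∅) ∧ (C : Set (Finset α)).PairwiseDisjoint id

/-- A partition of the set `S`: pairwise disjoint nonempty subsets whose union is `S`. -/
def IsPartitionOf (S : Finset α) (C : Finset (Finset α)) : Prop :=
  IsCollection C ∧ C.sup id = S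

/-- A partition of the grand coalition `N` (= `Finset.univ`). -/
def IsPartition (P : Finset (Finset α)) : Prop :=
  IsPartitionOf Finset.univ P

/-- The social welfare of a collection. -/
def sw (v : Finset α → ℝ) (C : Finset (Finset α)) : ℝ := ∑ S ∈ C, v S

/-- The collection `C` in the frame of the partition `P`:
`C[P] = {P₁ ∩ U, …, P_k ∩ U} \ {∅}` where `U` is the union of `C`. -/
def frame (C P : Finset (Finset α)) : Finset (Finset α) :=
  (P.image (fun Pi => Pi ∩ C.sup id)).erase ∅

/-- `P` is `D_c`-stable: `sw(C[P]) ≥ sw(C)` for every collection `C` in `N`. -/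
def DcStable (v : Finset α → ℝ) (P : Finset (Finset α)) : Prop :=
  ∀ C : Finset (Finset α), IsCollection C → sw v (frame C P) ≥ sw v C

/-- `P` is `D_p`-stable: `sw(P) ≥ sw(Q)` for every partition `Q` of `N`. -/
def DpStable (v : Finset α → ℝ) (P : Finset (Finset α)) : Prop :=
  ∀ Q : Finset (Finset α), IsPartition Q → sw v P ≥ sw v Q

/-- `Q` is `P`-homogeneous: every `Q_j` is contained in some `P_i` or contains some `P_i`. -/
def Homogeneous (P Q : Finset (Finset α)) : Prop :=
  ∀ Qj ∈ Q, ∃ Pi ∈ P, Qj ⊆ Pi ∨ Pi ⊆ Qj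

/-- `P` is `D_hp`-stable: `sw(P) ≥ sw(Q)` for every `P`-homogeneous partition `Q` of `N`. -/
def DhpStable (v : Finset α → ℝ) (P : Finset (Finset α)) : Prop :=
  ∀ Q : Finset (Finset α), IsPartition Q → Homogeneous P Q → sw v P ≥ sw v Q

/-- `P` is strictly `D_c`-stable: `sw(C[P]) > sw(C)` for every collection `C`
that is not a subset of `P`. -/
def StrictlyDcStable (v : Finset α → ℝ) (P : Finset (Finset α)) : Prop :=
  ∀ C : Finset (Finset α), IsCollection C → ¬ C ⊆ P → sw v (frame C P) > sw v C

/-- `P` is strictly `D_p`-stable. -/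
def StrictlyDpStable (v : Finset α → ℝ) (P : Finset (Finset α)) : Prop :=
  ∀ Q : Finset (Finset α), IsPartition Q → Q ≠ P → sw v P > sw v Q

/-- `P` is strictly `D_hp`-stable. -/
def StrictlyDhpStable (v : Finset α → ℝ) (P : Finset (Finset α)) : Prop :=
  ∀ Q : Finset (Finset α), IsPartition Q → Homogeneous P Q → Q ≠ P → sw v P > sw v Q

/-- The merge rule: distinct coalitions `T₁, …, T_k` (`k ≥ 2`) of `P` with
`∑ v(T_j) < v(∪ T_j)` are replaced by their union. -/
def MergeStep (v : Finset α → ℝ) (P P' : Finset (Finset α)) : Prop :=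
  ∃ T : Finset (Finset α), T ⊆ P ∧ 2 ≤ T.card ∧
    ∑ S ∈ T, v S < v (T.sup id) ∧ P' = insert (T.sup id) (P \ T)

/-- The split rule: a coalition `T` of `P` admitting a partition `{T₁, …, T_k}` (`k ≥ 2`)
with `v(T) < ∑ v(T_j)` is replaced by the coalitions `T₁, …, T_k`. -/
def SplitStep (v : Finset α → ℝ) (P P' : Finset (Finset α)) : Prop :=
  ∃ T ∈ P, ∃ D : Finset (Finset α), IsPartitionOf T D ∧ 2 ≤ D.card ∧
    v T < ∑ S ∈ D, v S ∧ P' = (P.erase T) ∪ D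

/-!
Let `P` be strictly `D_c`-stable and `P'` closed under both rules. A cell `T` of `P'` not contained
in a cell of `P` is cut by `P` into the partition `{T}[P]` of `T` into at least two pieces, and strict
stability for the collection `{T}` says these pieces are worth more than `T`: the split rule applies.
So `P'` refines `P`. If a cell `Pᵢ` of `P` were cut by `P'` into at least two cells `C`, then
`C[P] = {Pᵢ}` and strict stability for `C` says `Pᵢ` is worth more than its pieces: the merge rule
applies. So every cell of `P` is a cell of `P'`, and two partitions one of which contains the other
are equal.
-/

def Refines (Q P : Finset (Finset α)) : Prop :=
  ∀ T ∈ Q, ∃ S ∈ P, T ⊆ S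

section Collections

omit [Fintype α]

omit [DecidableEq α] in
lemma IsCollection.subset {C C' : Finset (Finset α)} (hC : IsCollection C) (h : C' ⊆ C) :
    IsCollection C' :=
  ⟨fun S hS => hC.1 S (h hS), hC.2.subset (by exact_mod_cast h)⟩

omit [DecidableEq α] in
lemma IsCollection.singleton {S : Finset α} (hS : S ≠ ∅) : IsCollection {S} :=
  ⟨by simpa using hS, by simp⟩

lemma IsPartitionOf.exists_mem {S : Finset α} {C : Finset (Finset α)} (hC : IsPartitionOf S C)
    {x : α} (hx : x ∈ S) : ∃ T ∈ C, x ∈ T := by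
  simpa using Finset.mem_sup.mp (hC.2 ▸ hx)

lemma IsPartitionOf.two_le_card {S : Finset α} {D : Finset (Finset α)} (hD : IsPartitionOf S D)
    (hS : S ≠ ∅) (hSD : S ∉ D) : 2 ≤ D.card := by
  by_contra! hcard
  obtain rfl | ⟨X, hX⟩ := D.eq_empty_or_nonempty
  · exact hS (by simpa using hD.2.symm)
  · obtain rfl : D = {X} := Finset.eq_singleton_iff_unique_mem.mpr
      ⟨hX, fun Y hY => Finset.card_le_one.mp (by omega) Y hY X hX⟩
    exact hSD (by simpa using hD.2.symm)

lemma IsPartitionOf.eq_of_subset {S : Finset α} {P Q : Finset (Finset α)}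
    (hP : IsPartitionOf S P) (hQ : IsPartitionOf S Q) (h : P ⊆ Q) : P = Q := by
  refine h.antisymm fun T hT => ?_
  obtain ⟨x, hx⟩ := Finset.nonempty_iff_ne_empty.mpr (hQ.1.1 T hT)
  have hxS : x ∈ S := hQ.2 ▸ Finset.le_sup (f := id) hT hx
  obtain ⟨T', hT', hxT'⟩ := hP.exists_mem hxS
  obtain rfl := hQ.1.2.elim_finset hT (h hT') x hx hxT'
  exact hT'

lemma mem_frame {C P : Finset (Finset α)} {S : Finset α} :
    S ∈ frame C P ↔ S ≠ ∅ ∧ ∃ Pi ∈ P, Pi ∩ C.sup id = S := by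
  simp [frame]

lemma isPartitionOf_frame {C P : Finset (Finset α)} (hP : (P : Set (Finset α)).PairwiseDisjoint id)
    (hcover : C.sup id ⊆ P.sup id) : IsPartitionOf (C.sup id) (frame C P) := by
  refine ⟨⟨fun S hS => (mem_frame.mp hS).1, ?_⟩, ?_⟩
  · rintro _ hS₁ _ hS₂ hne
    obtain ⟨-, Pi, hPi, rfl⟩ := mem_frame.mp hS₁
    obtain ⟨-, Pj, hPj, rfl⟩ := mem_frame.mp hS₂
    have hij : Pi ≠ Pj := by rintro rfl; exact hne rfl
    exact (hP hPi hPj hij).mono Finset.inter_subset_left Finset.inter_subset_left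
  · refine (Finset.sup_le fun S hS => ?_).antisymm fun x hx => ?_
    · obtain ⟨-, Pi, -, rfl⟩ := mem_frame.mp hS
      exact Finset.inter_subset_right
    · obtain ⟨Pi, hPi, hxPi⟩ : ∃ Pi ∈ P, x ∈ Pi := by simpa using Finset.mem_sup.mp (hcover hx)
      have hmem : Pi ∩ C.sup id ∈ frame C P :=
        mem_frame.mpr ⟨Finset.ne_empty_of_mem (Finset.mem_inter.mpr ⟨hxPi, hx⟩), Pi, hPi, rfl⟩
      exact Finset.le_sup (f := id) hmem (Finset.mem_inter.mpr ⟨hxPi, hx⟩)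

lemma frame_eq_singleton {C P : Finset (Finset α)} (hP : (P : Set (Finset α)).PairwiseDisjoint id)
    {Pi : Finset α} (hPi : Pi ∈ P) (hsub : C.sup id ⊆ Pi) (hne : C.sup id ≠ ∅) :
    frame C P = {C.sup id} := by
  ext S
  rw [mem_frame, Finset.mem_singleton]
  constructor
  · rintro ⟨hS, Pj, hPj, rfl⟩
    obtain ⟨x, hx⟩ := Finset.nonempty_iff_ne_empty.mpr hS
    obtain rfl := hP.elim_finset hPj hPi x (Finset.mem_inter.mp hx).1
      (hsub (Finset.mem_inter.mp hx).2)
    exact Finset.inter_eq_right.mpr hsub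
  · rintro rfl
    exact ⟨hne, Pi, hPi, Finset.inter_eq_right.mpr hsub⟩

lemma Refines.isPartitionOf_filter_subset {P Q : Finset (Finset α)} {S : Finset α}
    (hPQ : Refines Q P) (hP : (P : Set (Finset α)).PairwiseDisjoint id) (hS : S ∈ P)
    (hQ : IsCollection Q) (hcover : S ⊆ Q.sup id) :
    IsPartitionOf S (Q.filter (· ⊆ S)) := by
  refine ⟨hQ.subset (Finset.filter_subset _ _), ?_⟩
  refine (Finset.sup_le fun T hT => (Finset.mem_filter.mp hT).2).antisymm fun x hx => ?_
  obtain ⟨T, hT, hxT⟩ : ∃ T ∈ Q, x ∈ T := by simpa using Finset.mem_sup.mp (hcover hx)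
  obtain ⟨S', hS', hTS'⟩ := hPQ T hT
  obtain rfl := hP.elim_finset hS' hS x (hTS' hxT) hx
  exact Finset.le_sup (f := id) (Finset.mem_filter.mpr ⟨hT, hTS'⟩) hxT

end Collections

variable {v : Finset α → ℝ} {P P' : Finset (Finset α)}

lemma refines_of_not_splitStep (hP : IsPartition P) (hstrict : StrictlyDcStable v P)
    (hP' : IsCollection P') (hsplit : ¬ ∃ Q, SplitStep v P' Q) : Refines P' P := by
  intro T hT
  by_contra! hcut
  have hTne : T ≠ ∅ := hP'.1 T hT
  have hpart : IsPartitionOf T (frame {T} P) := by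
    simpa using isPartitionOf_frame (C := {T}) hP.1.2 (by simp [hP.2])
  have hTframe : T ∉ frame {T} P := by
    rintro hmem
    obtain ⟨-, Pi, hPi, hPiT⟩ := mem_frame.mp hmem
    exact hcut Pi hPi (by simpa using hPiT.symm ▸ Finset.inter_subset_left)
  have hgain : v T < ∑ S ∈ frame {T} P, v S := by
    simpa [sw] using hstrict {T} (.singleton hTne)
      (by simpa using fun hTP => hcut T hTP subset_rfl)
  exact hsplit ⟨_, T, hT, _, hpart, hpart.two_le_card hTne hTframe, hgain, rfl⟩

lemma subset_of_not_mergeStep (hP : IsPartition P) (hstrict : StrictlyDcStable v P)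
    (hP' : IsPartition P') (hrefines : Refines P' P) (hmerge : ¬ ∃ Q, MergeStep v P' Q) :
    P ⊆ P' := by
  intro Pi hPi
  set C := P'.filter (· ⊆ Pi)
  have hPine : Pi ≠ ∅ := hP.1.1 Pi hPi
  have hC : IsPartitionOf Pi C :=
    hrefines.isPartitionOf_filter_subset hP.1.2 hPi hP'.1 (by simp [hP'.2])
  by_contra hPiP'
  have hPiC : Pi ∉ C := fun h => hPiP' (Finset.mem_filter.mp h).1
  have hCP : ¬ C ⊆ P := by
    intro hCP
    obtain ⟨x, hx⟩ := Finset.nonempty_iff_ne_empty.mpr hPine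
    obtain ⟨T, hT, hxT⟩ := hC.exists_mem hx
    obtain rfl := hP.1.2.elim_finset (hCP hT) hPi x hxT hx
    exact hPiC hT
  have hgain : ∑ S ∈ C, v S < v (C.sup id) := by
    have := hstrict C hC.1 hCP
    rwa [frame_eq_singleton hP.1.2 hPi hC.2.le (hC.2 ▸ hPine), sw, Finset.sum_singleton] at this
  exact hmerge ⟨_, C, Finset.filter_subset _ _, hC.two_le_card hPine hPiC, hgain, rfl⟩

theorem closed_eq_strictly_Dc_stable_general (v : Finset α → ℝ)
    (P P' : Finset (Finset α)) (hP : IsPartition P) (hstrict : StrictlyDcStable v P)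
    (hP' : IsPartition P')
    (hmerge : ¬ ∃ Q : Finset (Finset α), MergeStep v P' Q)
    (hsplit : ¬ ∃ Q : Finset (Finset α), SplitStep v P' Q) :
    P' = P :=
  have hrefines := refines_of_not_splitStep hP hstrict hP'.1 hsplit
  (hP.eq_of_subset hP' (subset_of_not_mergeStep hP hstrict hP' hrefines hmerge)).symm

/-- Lemma 1: if a strictly `D_c`-stable partition exists, every partition closed
under the merge and split rules equals it. -/
theorem closed_eq_strictly_Dc_stable [Nonempty α] (v : Finset α → ℝ) (hv : v ∅ = 0)
    (P P' : Finset (Finset α)) (hP : IsPartition P) (hstrict : StrictlyDcStable v P)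
    (hP' : IsPartition P')
    (hmerge : ¬ ∃ Q : Finset (Finset α), MergeStep v P' Q)
    (hsplit : ¬ ∃ Q : Finset (Finset α), SplitStep v P' Q) :
    P' = P :=
  closed_eq_strictly_Dc_stable_general v P P' hP hstrict hP' hmerge hsplit
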